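/- Let n ≥ 1 and let cap : Fin n → Fin n → ℝ≥0∞ be edge capacities on a directed graph (cap u v = 0 means no edge). For 0 ≤ k ≤ n and vertices i, j, let W_k(i, j) = {(ℓ(w), bott(w)) : w a walk of length at least 1 from i to j all of whose intermediate vertices have index < k}, and for a set X of pairs let Max(X) denote its set of merit-maximal elements. Then for every k < n and all i, j: Max(W_{k+1}(i, j)) = Max( W_k(i, j) ∪ {(ℓ + ℓ', min f f') : (ℓ, f) ∈ W_k(i, k), (ℓ', f') ∈ W_k(k, j)} ). -/
import Mathlib


open scoped ENNReal

/-- The bottleneck of a walk: the minimum capacity of its edges. -/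
noncomputable def bott {n : ℕ} (cap : Fin n → Fin n → ℝ≥0∞) (k : ℕ)
    (v : Fin (k + 1) → Fin n) : ℝ≥0∞ :=
  ⨅ t : Fin k, cap (v t.castSucc) (v t.succ)

/-- The merit order on (length, bottleneck) pairs:
`(ℓ, f) ≥ₘ (ℓ', f')` iff `ℓ ≤ ℓ'` and `f ≥ f'`. -/
def MeritGE (p q : ℕ × ℝ≥0∞) : Prop := p.1 ≤ q.1 ∧ q.2 ≤ p.2

/-- `Wset cap K i j` is the set of (length, bottleneck) pairs of walks of
length at least 1 from `i` to `j` all of whose intermediate vertices have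
index `< K`. -/
def Wset {n : ℕ} (cap : Fin n → Fin n → ℝ≥0∞) (K : ℕ) (i j : Fin n) :
    Set (ℕ × ℝ≥0∞) :=
  {p | ∃ m, 1 ≤ m ∧ ∃ v : Fin (m + 1) → Fin n,
    v 0 = i ∧ v (Fin.last m) = j ∧
    (∀ t : Fin (m + 1), t ≠ 0 → t ≠ Fin.last m → (v t : ℕ) < K) ∧
    p = (m, bott cap m v)}

/-- The merit-maximal elements of a set of (length, bottleneck) pairs. -/
def MaxSet (X : Set (ℕ × ℝ≥0∞)) : Set (ℕ × ℝ≥0∞) :=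
  {p ∈ X | ∀ q ∈ X, MeritGE q p → q = p}

section Aux
variable {n : ℕ} (cap : Fin n → Fin n → ℝ≥0∞)

/-- Bottleneck of an ℕ-indexed walk of length m. -/
noncomputable def Nbott (u : ℕ → Fin n) (m : ℕ) : ℝ≥0∞ :=
  ⨅ t : Fin m, cap (u t) (u (t + 1))

lemma Nbott_le (u : ℕ → Fin n) (m t : ℕ) (ht : t < m) :
    Nbott cap u m ≤ cap (u t) (u (t + 1)) :=
  iInf_le (fun s : Fin m => cap (u s) (u (s + 1))) ⟨t, ht⟩

lemma le_Nbott (u : ℕ → Fin n) (m : ℕ) (c : ℝ≥0∞)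
    (h : ∀ t < m, c ≤ cap (u t) (u (t + 1))) : c ≤ Nbott cap u m :=
  le_iInf fun t => h t t.isLt

lemma mem_Wset_iff (K : ℕ) (i j : Fin n) (p : ℕ × ℝ≥0∞) :
    p ∈ Wset cap K i j ↔ ∃ m, 1 ≤ m ∧ ∃ u : ℕ → Fin n,
      u 0 = i ∧ u m = j ∧ (∀ s, 0 < s → s < m → (u s : ℕ) < K) ∧
      p = (m, Nbott cap u m) := by
  constructor
  · rintro ⟨m, hm, v, h0, hl, hint, hp⟩
    refine ⟨m, hm, fun s => v ⟨min s m, by omega⟩, ?_, ?_, ?_, ?_⟩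
    · rw [← h0]; exact congrArg v (Fin.ext (by simp))
    · rw [← hl]; exact congrArg v (Fin.ext (by simp [Fin.val_last]))
    · intro s hs1 hs2
      have := hint ⟨min s m, by omega⟩ (by simp [Fin.ext_iff]; omega)
        (by simp [Fin.ext_iff, Fin.val_last]; omega)
      simpa using this
    · rw [hp]
      refine Prod.ext rfl ?_
      show bott cap m v = _
      unfold bott Nbott
      refine iInf_congr fun t => ?_
      have ht := t.isLt
      congr 1
      · refine congrArg v (Fin.ext ?_)
        simp only [Fin.coe_castSucc, Fin.val_mk]
        omega
      · refine congrArg v (Fin.ext ?_)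
        simp only [Fin.val_succ, Fin.val_mk]
        omega
  · rintro ⟨m, hm, u, h0, hl, hint, hp⟩
    refine ⟨m, hm, fun s => u s, ?_, ?_, ?_, ?_⟩
    · simpa using h0
    · simpa [Fin.val_last] using hl
    · intro t ht0 htl
      have h1 : (t : ℕ) ≠ 0 := fun h => ht0 (Fin.ext (by simp [h]))
      have h2 : (t : ℕ) ≠ m := fun h => htl (Fin.ext (by simp [h, Fin.val_last]))
      have h3 := t.isLt
      exact hint t (by omega) (by omega)
    · rw [hp]
      refine Prod.ext rfl ?_
      show Nbott cap u m = bott cap m fun s => u ↑s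
      unfold bott Nbott
      exact iInf_congr fun t => by simp
end Aux

section Aux2
variable {n : ℕ} (cap : Fin n → Fin n → ℝ≥0∞)

/-- Concatenation of two ℕ-indexed walks, the first of length m. -/
def glue (u u' : ℕ → Fin n) (m : ℕ) : ℕ → Fin n :=
  fun s => if s ≤ m then u s else u' (s - m)

lemma glue_left (u u' : ℕ → Fin n) (m t : ℕ) (h : t ≤ m) :
    glue u u' m t = u t := if_pos h

lemma glue_right (u u' : ℕ → Fin n) (m t : ℕ) (h : m < t) :
    glue u u' m t = u' (t - m) := if_neg (by omega)

lemma glue_mid (u u' : ℕ → Fin n) (m t : ℕ) (h : u m = u' 0) (ht : m ≤ t) :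
    glue u u' m t = u' (t - m) := by
  rcases eq_or_lt_of_le ht with h' | h'
  · subst h'; rw [glue_left u u' m m le_rfl, Nat.sub_self, h]
  · exact glue_right u u' m t h'

lemma glue_bott (u u' : ℕ → Fin n) (m m' : ℕ) (h : u m = u' 0) :
    Nbott cap (glue u u' m) (m + m') = min (Nbott cap u m) (Nbott cap u' m') := by
  apply le_antisymm
  · apply le_min
    · apply le_Nbott
      intro t ht
      have e1 : glue u u' m t = u t := glue_left _ _ _ _ (by omega)
      have e2 : glue u u' m (t + 1) = u (t + 1) := glue_left _ _ _ _ (by omega)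
      have := Nbott_le cap (glue u u' m) (m + m') t (by omega)
      rwa [e1, e2] at this
    · apply le_Nbott
      intro t ht
      have e1 : glue u u' m (m + t) = u' t := by
        rw [glue_mid u u' m _ h (by omega)]; congr 1; omega
      have e2 : glue u u' m (m + t + 1) = u' (t + 1) := by
        rw [glue_right u u' m _ (by omega)]; congr 1; omega
      have := Nbott_le cap (glue u u' m) (m + m') (m + t) (by omega)
      rwa [e1, e2] at this
  · apply le_Nbott
    intro t ht
    by_cases htm : t < m
    · have e1 : glue u u' m t = u t := glue_left _ _ _ _ (by omega)
      have e2 : glue u u' m (t + 1) = u (t + 1) := glue_left _ _ _ _ (by omega)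
      rw [e1, e2]
      exact le_trans (min_le_left _ _) (Nbott_le cap u m t htm)
    · have e1 : glue u u' m t = u' (t - m) := glue_mid u u' m t h (by omega)
      have e2 : glue u u' m (t + 1) = u' (t - m + 1) := by
        rw [glue_right u u' m _ (by omega)]; congr 1; omega
      rw [e1, e2]
      exact le_trans (min_le_right _ _) (Nbott_le cap u' m' (t - m) (by omega))

lemma split_bott (u : ℕ → Fin n) (m t0 : ℕ) (h2 : t0 < m) :
    Nbott cap u m = min (Nbott cap u t0) (Nbott cap (fun s => u (t0 + s)) (m - t0)) := by
  apply le_antisymm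
  · apply le_min
    · exact le_Nbott cap u t0 _ fun t ht => Nbott_le cap u m t (by omega)
    · apply le_Nbott
      intro t ht
      have := Nbott_le cap u m (t0 + t) (by omega)
      have e : t0 + t + 1 = t0 + (t + 1) := by omega
      rw [e] at this
      exact this
  · apply le_Nbott
    intro t ht
    by_cases htt : t < t0
    · exact le_trans (min_le_left _ _) (Nbott_le cap u t0 t htt)
    · have := Nbott_le cap (fun s => u (t0 + s)) (m - t0) (t - t0) (by omega)
      have e1 : t0 + (t - t0) = t := by omega
      have e2 : t0 + (t - t0 + 1) = t + 1 := by omega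
      simp only [e1, e2] at this
      exact le_trans (min_le_right _ _) this

lemma cut_bott (u : ℕ → Fin n) (m t1 t2 : ℕ) (h12 : t1 < t2) (h2m : t2 ≤ m)
    (hval : u t1 = u t2) :
    Nbott cap u m ≤
      Nbott cap (fun s => if s ≤ t1 then u s else u (s + (t2 - t1))) (m - (t2 - t1)) := by
  apply le_Nbott
  intro s hs
  by_cases h1 : s < t1
  · have e1 : (if s ≤ t1 then u s else u (s + (t2 - t1))) = u s := if_pos (by omega)
    have e2 : (if s + 1 ≤ t1 then u (s + 1) else u (s + 1 + (t2 - t1))) = u (s + 1) :=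
      if_pos (by omega)
    rw [e1, e2]
    exact Nbott_le cap u m s (by omega)
  · by_cases h2 : s = t1
    · have e1 : (if s ≤ t1 then u s else u (s + (t2 - t1))) = u t2 := by
        rw [if_pos (by omega), h2, hval]
      have e2 : (if s + 1 ≤ t1 then u (s + 1) else u (s + 1 + (t2 - t1))) = u (t2 + 1) := by
        rw [if_neg (by omega)]; congr 1; omega
      rw [e1, e2]
      exact Nbott_le cap u m t2 (by omega)
    · have e1 : (if s ≤ t1 then u s else u (s + (t2 - t1))) = u (s + (t2 - t1)) :=
        if_neg (by omega)
      have e2 : (if s + 1 ≤ t1 then u (s + 1) else u (s + 1 + (t2 - t1))) = u (s + (t2 - t1) + 1) := by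
        rw [if_neg (by omega)]; congr 1; omega
      rw [e1, e2]
      exact Nbott_le cap u m (s + (t2 - t1)) (by omega)

end Aux2

lemma meritGE_refl (p : ℕ × ℝ≥0∞) : MeritGE p p := ⟨le_rfl, le_rfl⟩

lemma meritGE_trans {p q r : ℕ × ℝ≥0∞} (h1 : MeritGE p q) (h2 : MeritGE q r) :
    MeritGE p r := ⟨h1.1.trans h2.1, h2.2.trans h1.2⟩

lemma meritGE_antisymm {p q : ℕ × ℝ≥0∞} (h1 : MeritGE p q) (h2 : MeritGE q p) :
    p = q := Prod.ext (le_antisymm h1.1 h2.1) (le_antisymm h2.2 h1.2)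

lemma maxSet_eq_of_dom {A B : Set (ℕ × ℝ≥0∞)} (hBA : B ⊆ A)
    (hdom : ∀ p ∈ A, ∃ q ∈ B, MeritGE q p) : MaxSet A = MaxSet B := by
  ext p
  constructor
  · rintro ⟨hpA, hmax⟩
    obtain ⟨q, hqB, hqp⟩ := hdom p hpA
    have hq : q = p := hmax q (hBA hqB) hqp
    subst hq
    exact ⟨hqB, fun r hr hrq => hmax r (hBA hr) hrq⟩
  · rintro ⟨hpB, hmax⟩
    refine ⟨hBA hpB, fun q hqA hqp => ?_⟩
    obtain ⟨r, hrB, hrq⟩ := hdom q hqA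
    have hrp : r = p := hmax r hrB (meritGE_trans hrq hqp)
    subst hrp
    exact meritGE_antisymm hqp hrq

lemma exists_dom {n : ℕ} (cap : Fin n → Fin n → ℝ≥0∞) (k i j : Fin n) :
    ∀ m : ℕ, ∀ u : ℕ → Fin n, 1 ≤ m → u 0 = i → u m = j →
      (∀ s, 0 < s → s < m → (u s : ℕ) < (k : ℕ) + 1) →
      ∃ q ∈ (Wset cap (k : ℕ) i j ∪
        {p | ∃ a ∈ Wset cap (k : ℕ) i k, ∃ b ∈ Wset cap (k : ℕ) k j,
          p = (a.1 + b.1, min a.2 b.2)}),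
        MeritGE q (m, Nbott cap u m) := by
  intro m
  induction m using Nat.strong_induction_on with
  | _ m IH =>
    intro u hm h0 hmj hint
    by_cases hall : ∀ s, 0 < s → s < m → (u s : ℕ) < (k : ℕ)
    · exact ⟨(m, Nbott cap u m),
        Or.inl ((mem_Wset_iff cap _ i j _).2 ⟨m, hm, u, h0, hmj, hall, rfl⟩),
        meritGE_refl _⟩
    · push_neg at hall
      obtain ⟨t1, ht1, ht1m, ht1k⟩ := hall
      have ht1k' : u t1 = k := Fin.ext (by have := hint t1 ht1 ht1m; omega)
      by_cases hsec : ∃ t, 0 < t ∧ t < m ∧ t ≠ t1 ∧ u t = k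
      · obtain ⟨t2, ht2, ht2m, hne, ht2k⟩ := hsec
        obtain ⟨a, b, hab, h0a, hbm, hua, hub⟩ :
            ∃ a b, a < b ∧ 0 < a ∧ b < m ∧ u a = k ∧ u b = k := by
          rcases lt_or_gt_of_ne hne with h | h
          · exact ⟨t2, t1, h, ht2, ht1m, ht2k, ht1k'⟩
          · exact ⟨t1, t2, h, ht1, ht2m, ht1k', ht2k⟩
        have hm'm : m - (b - a) < m := by omega
        have hm'1 : 1 ≤ m - (b - a) := by omega
        have h0' : (if 0 ≤ a then u 0 else u (0 + (b - a))) = i := by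
          rw [if_pos (Nat.zero_le a)]; exact h0
        have hl' : (if m - (b - a) ≤ a then u (m - (b - a))
            else u (m - (b - a) + (b - a))) = j := by
          rw [if_neg (by omega), show m - (b - a) + (b - a) = m from by omega]
          exact hmj
        have hint' : ∀ s, 0 < s → s < m - (b - a) →
            (((if s ≤ a then u s else u (s + (b - a))) : Fin n) : ℕ) < (k : ℕ) + 1 := by
          intro s hs1 hs2
          by_cases hsa : s ≤ a
          · rw [if_pos hsa]; exact hint s hs1 (by omega)
          · rw [if_neg hsa]; exact hint (s + (b - a)) (by omega) (by omega)
        obtain ⟨q, hqB, hq⟩ := IH (m - (b - a)) hm'm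
          (fun s => if s ≤ a then u s else u (s + (b - a))) hm'1 h0' hl' hint'
        refine ⟨q, hqB, meritGE_trans hq ⟨le_of_lt hm'm, ?_⟩⟩
        exact cut_bott cap u m a b hab (by omega) (by rw [hua, hub])
      · push_neg at hsec
        have hvalne : ∀ s, 0 < s → s < m → s ≠ t1 → ((u s : ℕ) ≠ (k : ℕ)) := by
          intro s h1 h2 h3 h4
          exact hsec s h1 h2 h3 (Fin.ext h4)
        have hmemA : ((t1 : ℕ), Nbott cap u t1) ∈ Wset cap (k : ℕ) i k :=
          (mem_Wset_iff cap _ i k _).2 ⟨t1, ht1, u, h0, ht1k',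
            fun s h1 h2 => by
              have := hint s h1 (by omega)
              have := hvalne s h1 (by omega) (by omega)
              omega, rfl⟩
        have hmemB : ((m - t1 : ℕ), Nbott cap (fun s => u (t1 + s)) (m - t1))
            ∈ Wset cap (k : ℕ) k j :=
          (mem_Wset_iff cap _ k j _).2 ⟨m - t1, by omega, fun s => u (t1 + s),
            by show u (t1 + 0) = k; rw [Nat.add_zero]; exact ht1k',
            by show u (t1 + (m - t1)) = j
               rw [show t1 + (m - t1) = m from by omega]; exact hmj,
            fun s h1 h2 => by
              show ((u (t1 + s) : Fin n) : ℕ) < (k : ℕ)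
              have := hint (t1 + s) (by omega) (by omega)
              have := hvalne (t1 + s) (by omega) (by omega) (by omega)
              omega, rfl⟩
        refine ⟨(m, Nbott cap u m), Or.inr ⟨(t1, Nbott cap u t1), hmemA,
          ((m - t1), Nbott cap (fun s => u (t1 + s)) (m - t1)), hmemB, ?_⟩,
          meritGE_refl _⟩
        refine Prod.ext (by omega) ?_
        exact split_bott cap u m t1 ht1m

theorem stmt17 {n : ℕ} (hn : 1 ≤ n) (cap : Fin n → Fin n → ℝ≥0∞)
    (k : Fin n) (i j : Fin n) :
    MaxSet (Wset cap ((k : ℕ) + 1) i j) =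
      MaxSet (Wset cap (k : ℕ) i j ∪
        {p | ∃ a ∈ Wset cap (k : ℕ) i k, ∃ b ∈ Wset cap (k : ℕ) k j,
          p = (a.1 + b.1, min a.2 b.2)}) := by
  apply maxSet_eq_of_dom
  · rintro p (hp | hp)
    · obtain ⟨m, hm, u, h0, hl, hintu, hp'⟩ := (mem_Wset_iff cap _ i j p).1 hp
      exact (mem_Wset_iff cap _ i j p).2 ⟨m, hm, u, h0, hl,
        fun s h1 h2 => by have := hintu s h1 h2; omega, hp'⟩
    · obtain ⟨a, ha, b, hb, hp'⟩ := hp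
      obtain ⟨m, hm, u, h0, hl, hintu, ha'⟩ := (mem_Wset_iff cap _ i k a).1 ha
      obtain ⟨m', hm', u', h0', hl', hintu', hb'⟩ := (mem_Wset_iff cap _ k j b).1 hb
      have hjoin : u m = u' 0 := by rw [hl, h0']
      refine (mem_Wset_iff cap _ i j p).2 ⟨m + m', by omega, glue u u' m, ?_, ?_, ?_, ?_⟩
      · rw [glue_left u u' m 0 (by omega)]; exact h0
      · rw [glue_right u u' m _ (by omega),
          show m + m' - m = m' from by omega]
        exact hl'
      · intro s hs1 hs2
        by_cases hsm : s ≤ m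
        · rcases eq_or_lt_of_le hsm with h | h
          · rw [glue_left u u' m s hsm, h, hl]
            omega
          · rw [glue_left u u' m s hsm]
            have := hintu s hs1 h
            omega
        · rw [glue_right u u' m s (by omega)]
          have := hintu' (s - m) (by omega) (by omega)
          omega
      · rw [hp', ha', hb']
        exact Prod.ext rfl (glue_bott cap u u' m m' hjoin).symm
  · intro p hp
    obtain ⟨m, hm, u, h0, hl, hintu, hp'⟩ := (mem_Wset_iff cap _ i j p).1 hp
    rw [hp']
    exact exists_dom cap k i j m u hm h0 hl hintu
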